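/- Let G and H be totally disconnected locally compact groups and φ : G → G, ψ : H → H topological automorphisms. Then h_top(φ × ψ) = h_top(φ) + h_top(ψ), where φ × ψ : G × H → G × H is the product automorphism. -/

import Mathlib

open Filter Topology

variable {G : Type*} [Group G]

/-- The `n`-th `φ`-cotrajectory `Cₙ(φ,U) = ⋂_{i<n} φ^{-i}(U)`. -/
def cotrajN (φ : MulAut G) (U : Subgroup G) (n : ℕ) : Subgroup G :=
  ⨅ i ∈ Finset.range n, Subgroup.comap (φ ^ i).toMonoidHom U

/-- `cₙ = [U : Cₙ(φ,U)]`. -/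
noncomputable def entIdx (φ : MulAut G) (U : Subgroup G) (n : ℕ) : ℕ :=
  (cotrajN φ U n).relIndex U

/-- The topological entropy of `φ` with respect to `U`,
`H_top(φ,U) = lim_n log cₙ / n` (the limit exists, so it equals the `limsup`). -/
noncomputable def Htop (φ : MulAut G) (U : Subgroup G) : ℝ :=
  limsup (fun n : ℕ => Real.log (entIdx φ U n) / n) atTop

/-- The `φ`-cotrajectory `C(φ,U) = ⋂_{n≥0} φ^{-n}(U)`. -/
def cotraj (φ : MulAut G) (U : Subgroup G) : Subgroup G :=
  ⨅ n : ℕ, Subgroup.comap (φ ^ n).toMonoidHom U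

/-- The topological entropy `h_top(φ) = sup {H_top(φ,U) : U open compact subgroup}`. -/
noncomputable def htop [TopologicalSpace G] (φ : MulAut G) : EReal :=
  ⨆ (U : Subgroup G) (_ : IsOpen (U : Set G) ∧ IsCompact (U : Set G)), ((Htop φ U : ℝ) : EReal)

/-!
For an open compact subgroup `U`, the indices `cₙ = [U : Cₙ(φ,U)]` are finite, and the step
indices `[Cₙ₊₁ : Cₙ₊₂]` are non-increasing because `φ` maps `Cₙ₊₂` into `Cₙ₊₁`. They are
therefore eventually constant, `cₙ` eventually grows geometrically, and `log cₙ / n` converges.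
For a product `U × V` the cotrajectories are products, so `cₙ` is multiplicative and
`H_top(φ × ψ, U × V) = H_top(φ, U) + H_top(ψ, V)`. Finally `H_top(φ, ·)` is antitone, and every
open compact `W ≤ G × H` contains the product of its slices `W ∩ G` and `W ∩ H`, which are open
compact; so the supremum defining `h_top(φ × ψ)` may be taken over products only.
-/

open Subgroup

theorem Subgroup.relIndex_ne_zero_of_isOpen_of_isCompact [TopologicalSpace G]
    [IsTopologicalGroup G] {A B : Subgroup G} (hA : IsOpen (A : Set G))
    (hB : IsCompact (B : Set G)) : A.relIndex B ≠ 0 := by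
  have : CompactSpace B := isCompact_iff_compactSpace.mp hB
  have : Finite (B ⧸ A.subgroupOf B) :=
    quotient_finite_of_isOpen _ (hA.preimage continuous_subtype_val)
  exact index_ne_zero_of_finite

theorem Subgroup.relIndex_prod {H : Type*} [Group H] (A U : Subgroup G) (B V : Subgroup H) :
    (A.prod B).relIndex (U.prod V) = A.relIndex U * B.relIndex V := by
  let f : U.prod V →* U × V :=
    { toFun := fun x => (⟨x.1.1, (mem_prod.mp x.2).1⟩, ⟨x.1.2, (mem_prod.mp x.2).2⟩)
      map_one' := rfl
      map_mul' := fun _ _ => rfl }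
  have hf : Function.Surjective f := fun ⟨u, v⟩ => ⟨⟨(u.1, v.1), mem_prod.mpr ⟨u.2, v.2⟩⟩, rfl⟩
  have hcomap : (A.prod B).subgroupOf (U.prod V) =
      ((A.subgroupOf U).prod (B.subgroupOf V)).comap f := by
    ext x
    simp [mem_subgroupOf, mem_prod, f]
  rw [relIndex, relIndex, relIndex, hcomap, index_comap_of_surjective _ hf, index_prod]

theorem tendsto_div_natCast_of_succ_eq_add {g : ℕ → ℝ} {L : ℝ} {N : ℕ}
    (hg : ∀ n ≥ N, g (n + 1) = g n + L) : Tendsto (fun n => g n / n) atTop (𝓝 L) := by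
  have hlin : ∀ n ≥ N, g n = (g N - N * L) + n * L := by
    refine Nat.le_induction (by ring) fun n hn ih => ?_
    rw [hg n hn, ih]
    push_cast
    ring
  have hK := (tendsto_const_div_atTop_nhds_zero_nat (g N - N * L)).add_const L
  rw [zero_add] at hK
  refine hK.congr' (eventually_atTop.2 ⟨N + 1, fun n hn => ?_⟩)
  have hn0 : (n : ℝ) ≠ 0 := by exact_mod_cast (show n ≠ 0 by omega)
  dsimp only
  rw [hlin n (by omega)]
  field_simp

theorem MulAut.coe_pow (φ : MulAut G) (n : ℕ) : ⇑(φ ^ n) = (⇑φ)^[n] := by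
  induction n with
  | zero => rfl
  | succ n ih => rw [pow_succ, Function.iterate_succ, ← ih]; rfl

section Cotrajectory

variable {φ : MulAut G} {U V : Subgroup G} {n : ℕ}

theorem mem_cotrajN {x : G} : x ∈ cotrajN φ U n ↔ ∀ i < n, (φ ^ i) x ∈ U := by
  simp [cotrajN]

theorem cotrajN_antitone : Antitone (cotrajN φ U) :=
  fun _ _ hmn _ hx => mem_cotrajN.2 fun i hi => mem_cotrajN.1 hx i (hi.trans_le hmn)

theorem cotrajN_succ_le : cotrajN φ U (n + 1) ≤ U := fun _ hx => by
  simpa using mem_cotrajN.1 hx 0 n.succ_pos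

theorem cotrajN_mono (h : U ≤ V) (n : ℕ) : cotrajN φ U n ≤ cotrajN φ V n :=
  fun _ hx => mem_cotrajN.2 fun i hi => h (mem_cotrajN.1 hx i hi)

theorem cotrajN_add_two :
    cotrajN φ U (n + 2) = (cotrajN φ U (n + 1)).comap φ.toMonoidHom ⊓ cotrajN φ U (n + 1) := by
  ext x
  simp only [Subgroup.mem_inf, mem_cotrajN, Subgroup.mem_comap, MulEquiv.coe_toMonoidHom]
  constructor
  · refine fun h => ⟨fun i hi => ?_, fun i hi => h i (by omega)⟩
    simpa only [pow_succ, MulAut.mul_apply] using h (i + 1) (by omega)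
  · rintro ⟨h, h'⟩ (_ | i) hi
    · exact h' 0 (by omega)
    · simpa only [pow_succ, MulAut.mul_apply] using h i (by omega)

theorem map_cotrajN_add_two_le :
    (cotrajN φ U (n + 2)).map φ.toMonoidHom ≤ cotrajN φ U (n + 1) := by
  rw [Subgroup.map_le_iff_le_comap, cotrajN_add_two]
  exact inf_le_left.trans (comap_mono (cotrajN_antitone (by omega)))

end Cotrajectory

section StepIndex

variable {φ : MulAut G} {U : Subgroup G}

noncomputable def stepIdx (φ : MulAut G) (U : Subgroup G) (n : ℕ) : ℕ :=
  (cotrajN φ U (n + 2)).relIndex (cotrajN φ U (n + 1))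

theorem entIdx_add_two (n : ℕ) : entIdx φ U (n + 2) = stepIdx φ U n * entIdx φ U (n + 1) :=
  (relIndex_mul_relIndex _ _ _ (cotrajN_antitone (by omega)) cotrajN_succ_le).symm

theorem stepIdx_succ_le {n : ℕ} (hn : stepIdx φ U n ≠ 0) :
    stepIdx φ U (n + 1) ≤ stepIdx φ U n :=
  calc stepIdx φ U (n + 1)
      = (cotrajN φ U (n + 2)).relIndex ((cotrajN φ U (n + 2)).map φ.toMonoidHom) := by
        rw [stepIdx, cotrajN_add_two (n := n + 1), inf_relIndex_right, relIndex_comap]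
    _ ≤ stepIdx φ U n := relIndex_le_of_le_right map_cotrajN_add_two_le hn

variable [TopologicalSpace G] (hφ : Continuous φ) (hUo : IsOpen (U : Set G))
include hφ hUo

theorem isOpen_cotrajN (n : ℕ) : IsOpen (cotrajN φ U n : Set G) := by
  simp only [cotrajN, coe_iInf]
  exact isOpen_biInter_finset fun i _ =>
    hUo.preimage (by simpa [MulAut.coe_pow] using hφ.iterate i)

variable [IsTopologicalGroup G] (hUc : IsCompact (U : Set G))
include hUc

theorem entIdx_ne_zero (n : ℕ) : entIdx φ U n ≠ 0 :=
  relIndex_ne_zero_of_isOpen_of_isCompact (isOpen_cotrajN hφ hUo n) hUc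

theorem stepIdx_ne_zero (n : ℕ) : stepIdx φ U n ≠ 0 :=
  relIndex_ne_zero_of_isOpen_of_isCompact (isOpen_cotrajN hφ hUo (n + 2))
    (hUc.of_isClosed_subset ((cotrajN φ U (n + 1)).isClosed_of_isOpen (isOpen_cotrajN hφ hUo _))
      cotrajN_succ_le)

theorem stepIdx_antitone : Antitone (stepIdx φ U) :=
  antitone_nat_of_succ_le fun n => stepIdx_succ_le (stepIdx_ne_zero hφ hUo hUc n)

theorem tendsto_Htop : Tendsto (fun n : ℕ => Real.log (entIdx φ U n) / n) atTop (𝓝 (Htop φ U)) := by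
  obtain ⟨N, hN⟩ := WellFoundedLT.antitone_chain_condition (stepIdx_antitone hφ hUo hUc)
  have hlim : Tendsto (fun n : ℕ => Real.log (entIdx φ U n) / n) atTop
      (𝓝 (Real.log (stepIdx φ U N))) := by
    refine tendsto_div_natCast_of_succ_eq_add (N := N + 1) fun n hn => ?_
    obtain ⟨m, rfl⟩ : ∃ m, n = m + 1 := ⟨n - 1, by omega⟩
    rw [entIdx_add_two, ← hN m (by omega), Nat.cast_mul,
      Real.log_mul (by exact_mod_cast stepIdx_ne_zero hφ hUo hUc N)
        (by exact_mod_cast entIdx_ne_zero hφ hUo hUc _), add_comm]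
  rwa [Htop, hlim.limsup_eq]

end StepIndex

section Monotone

variable [TopologicalSpace G] [IsTopologicalGroup G] {φ : MulAut G} {P W : Subgroup G}

theorem entIdx_le_mul_relIndex (hφ : Continuous φ) (hPo : IsOpen (P : Set G))
    (hWc : IsCompact (W : Set G)) (hPW : P ≤ W) (n : ℕ) :
    entIdx φ W (n + 1) ≤ entIdx φ P (n + 1) * P.relIndex W :=
  calc entIdx φ W (n + 1) ≤ (cotrajN φ P (n + 1)).relIndex W :=
        relIndex_le_of_le_left (cotrajN_mono hPW _)
          (relIndex_ne_zero_of_isOpen_of_isCompact (isOpen_cotrajN hφ hPo _) hWc)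
    _ = entIdx φ P (n + 1) * P.relIndex W :=
        (relIndex_mul_relIndex _ _ _ cotrajN_succ_le hPW).symm

theorem Htop_anti (hφ : Continuous φ) (hPo : IsOpen (P : Set G)) (hPc : IsCompact (P : Set G))
    (hWo : IsOpen (W : Set G)) (hWc : IsCompact (W : Set G)) (hPW : P ≤ W) :
    Htop φ W ≤ Htop φ P := by
  have hr : (P.relIndex W : ℝ) ≠ 0 := by
    exact_mod_cast relIndex_ne_zero_of_isOpen_of_isCompact hPo hWc
  have hP := (tendsto_Htop hφ hPo hPc).add (tendsto_const_div_atTop_nhds_zero_nat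
    (Real.log (P.relIndex W)))
  rw [add_zero] at hP
  refine le_of_tendsto_of_tendsto (tendsto_Htop hφ hWo hWc) hP
    (eventually_atTop.2 ⟨1, fun n hn => ?_⟩)
  obtain ⟨m, rfl⟩ : ∃ m, n = m + 1 := ⟨n - 1, by omega⟩
  dsimp only
  rw [← add_div, ← Real.log_mul (by exact_mod_cast entIdx_ne_zero hφ hPo hPc _) hr]
  gcongr
  · exact_mod_cast Nat.pos_of_ne_zero (entIdx_ne_zero hφ hWo hWc _)
  · exact_mod_cast entIdx_le_mul_relIndex hφ hPo hWc hPW m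

end Monotone

section Product

variable {H : Type*} [Group H] {φ : MulAut G} {ψ : MulAut H}

theorem MulEquiv.prodCongr_pow (φ : MulAut G) (ψ : MulAut H) (n : ℕ) :
    φ.prodCongr ψ ^ n = (φ ^ n).prodCongr (ψ ^ n) := by
  induction n with
  | zero => rfl
  | succ n ih => rw [pow_succ, ih, pow_succ, pow_succ]; rfl

theorem cotrajN_prodCongr (U : Subgroup G) (V : Subgroup H) (n : ℕ) :
    cotrajN (φ.prodCongr ψ) (U.prod V) n = (cotrajN φ U n).prod (cotrajN ψ V n) := by
  ext x
  simp only [mem_cotrajN, mem_prod, MulEquiv.prodCongr_pow]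
  exact ⟨fun h => ⟨fun i hi => (h i hi).1, fun i hi => (h i hi).2⟩,
    fun h i hi => ⟨h.1 i hi, h.2 i hi⟩⟩

theorem entIdx_prodCongr (U : Subgroup G) (V : Subgroup H) (n : ℕ) :
    entIdx (φ.prodCongr ψ) (U.prod V) n = entIdx φ U n * entIdx ψ V n := by
  rw [entIdx, entIdx, entIdx, cotrajN_prodCongr, relIndex_prod]

variable [TopologicalSpace G] [IsTopologicalGroup G] [TopologicalSpace H]
  [IsTopologicalGroup H] {U : Subgroup G} {V : Subgroup H}

theorem Htop_prodCongr (hφ : Continuous φ) (hψ : Continuous ψ)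
    (hUo : IsOpen (U : Set G)) (hUc : IsCompact (U : Set G))
    (hVo : IsOpen (V : Set H)) (hVc : IsCompact (V : Set H)) :
    Htop (φ.prodCongr ψ) (U.prod V) = Htop φ U + Htop ψ V := by
  refine ((tendsto_Htop hφ hUo hUc).add (tendsto_Htop hψ hVo hVc)).congr (fun n => ?_)
    |>.limsup_eq
  rw [entIdx_prodCongr, Nat.cast_mul, Real.log_mul (by exact_mod_cast entIdx_ne_zero hφ hUo hUc n)
    (by exact_mod_cast entIdx_ne_zero hψ hVo hVc n), add_div]

theorem Subgroup.isCompact_comap_of_leftInverse {K L : Type*} [Group K] [Group L]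
    [TopologicalSpace K] [SeparatelyContinuousMul K] [TopologicalSpace L] {f : K →* L}
    (hf : Continuous f) {p : L → K} (hp : Continuous p) (hpf : Function.LeftInverse p f)
    {W : Subgroup L} (hWo : IsOpen (W : Set L)) (hWc : IsCompact (W : Set L)) :
    IsCompact (W.comap f : Set K) :=
  (hWc.image hp).of_isClosed_subset ((W.comap f).isClosed_of_isOpen (hWo.preimage hf))
    fun k hk => ⟨f k, hk, hpf k⟩

theorem exists_prod_le_of_isOpen_of_isCompact {W : Subgroup (G × H)}
    (hW : IsOpen (W : Set (G × H)) ∧ IsCompact (W : Set (G × H))) :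
    ∃ U : Subgroup G, ∃ V : Subgroup H, (IsOpen (U : Set G) ∧ IsCompact (U : Set G)) ∧
      (IsOpen (V : Set H) ∧ IsCompact (V : Set H)) ∧ U.prod V ≤ W := by
  have hinl : Continuous (MonoidHom.inl G H) := continuous_id.prodMk continuous_const
  have hinr : Continuous (MonoidHom.inr G H) := continuous_const.prodMk continuous_id
  refine ⟨W.comap (MonoidHom.inl G H), W.comap (MonoidHom.inr G H),
    ⟨hW.1.preimage hinl,
      isCompact_comap_of_leftInverse hinl continuous_fst (fun _ => rfl) hW.1 hW.2⟩,
    ⟨hW.1.preimage hinr,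
      isCompact_comap_of_leftInverse hinr continuous_snd (fun _ => rfl) hW.1 hW.2⟩,
    fun x hx => ?_⟩
  simpa using W.mul_mem (mem_prod.1 hx).1 (mem_prod.1 hx).2

end Product

theorem le_htop [TopologicalSpace G] {φ : MulAut G} {U : Subgroup G}
    (hU : IsOpen (U : Set G) ∧ IsCompact (U : Set G)) :
    (Htop φ U : EReal) ≤ htop φ :=
  le_iSup₂_of_le U hU le_rfl

theorem weak_addition_theorem_general {H : Type*} [Group H]
    [TopologicalSpace G] [IsTopologicalGroup G]
    [TopologicalSpace H] [IsTopologicalGroup H]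
    (φ : MulAut G) (hφ : Continuous φ)
    (ψ : MulAut H) (hψ : Continuous ψ) :
    htop (φ.prodCongr ψ) = htop φ + htop ψ := by
  have hφψ : Continuous (φ.prodCongr ψ) := hφ.prodMap hψ
  refine le_antisymm (iSup₂_le fun W hW => ?_) (EReal.add_le_of_forall_lt fun a ha b hb => ?_)
  · obtain ⟨U, V, hU, hV, hUV⟩ := exists_prod_le_of_isOpen_of_isCompact hW
    calc (Htop (φ.prodCongr ψ) W : EReal)
        ≤ Htop (φ.prodCongr ψ) (U.prod V) := EReal.coe_le_coe_iff.2 <|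
          Htop_anti hφψ (hU.1.prod hV.1) (hU.2.prod hV.2) hW.1 hW.2 hUV
      _ = Htop φ U + Htop ψ V := by rw [Htop_prodCongr hφ hψ hU.1 hU.2 hV.1 hV.2, EReal.coe_add]
      _ ≤ htop φ + htop ψ := add_le_add (le_htop hU) (le_htop hV)
  · simp only [htop, lt_iSup_iff] at ha hb
    obtain ⟨U, hU, ha⟩ := ha
    obtain ⟨V, hV, hb⟩ := hb
    calc a + b ≤ Htop φ U + Htop ψ V := add_le_add ha.le hb.le
      _ = Htop (φ.prodCongr ψ) (U.prod V) := by
        rw [Htop_prodCongr hφ hψ hU.1 hU.2 hV.1 hV.2, EReal.coe_add]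
      _ ≤ htop (φ.prodCongr ψ) := le_htop ⟨hU.1.prod hV.1, hU.2.prod hV.2⟩

theorem weak_addition_theorem {H : Type*} [Group H]
    [TopologicalSpace G] [IsTopologicalGroup G] [LocallyCompactSpace G] [TotallyDisconnectedSpace G]
    [TopologicalSpace H] [IsTopologicalGroup H] [LocallyCompactSpace H] [TotallyDisconnectedSpace H]
    (φ : MulAut G) (hφ : Continuous φ) (hφ' : Continuous φ⁻¹)
    (ψ : MulAut H) (hψ : Continuous ψ) (hψ' : Continuous ψ⁻¹) :
    htop (φ.prodCongr ψ) = htop φ + htop ψ :=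
  weak_addition_theorem_general φ hφ ψ hψ
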